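/- For every positive integer n that is not a perfect square, the product n·g(n) is not a perfect square. -/

import Mathlib

/-!
Write `n = b² q` with `q` squarefree; `q ≥ 2` because `n` is not a square. The four numbers
`b² q < b (q b + 1) < q b (b + 1) < (b + 1)(q b + 1)` have square product, so
`n ≤ g n < q (b + 1)²`. If `n · g n` were a square, then `q · g n` would be a square, and since `q`
is squarefree `g n = q e²`; the bounds force `e = b`, i.e. `g n = n`. But the only square-product
sequence from `n` to `n` is `{n}`, so `n` would be a square.
-/

/-- `Corr n k` says there is a square-product sequence (a nonempty finite set of
positive integers whose product is a perfect square) with least term `n` and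
greatest term `k`. -/
def Corr (n k : ℕ) : Prop :=
  ∃ S : Finset ℕ, (∀ a ∈ S, 0 < a) ∧ IsSquare (∏ a ∈ S, a) ∧
    n ∈ S ∧ k ∈ S ∧ ∀ a ∈ S, n ≤ a ∧ a ≤ k

/-- Ron Graham's sequence: the least `k` such that there is a square-product
sequence with least term `n` and greatest term `k`. -/
noncomputable def g (n : ℕ) : ℕ := sInf {k | Corr n k}

theorem Squarefree.exists_eq_mul_sq_of_isSquare_mul {R : Type*} [CommMonoidWithZero R]
    [IsCancelMulZero R] [DecompositionMonoid R] [Nontrivial R] {q m : R} (hq : Squarefree q)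
    (h : IsSquare (q * m)) : ∃ e, m = q * e ^ 2 := by
  obtain ⟨c, hc⟩ := h
  obtain ⟨d, rfl⟩ : q ∣ c := (hq.dvd_pow_iff_dvd two_ne_zero).mp ⟨m, by rw [sq, hc]⟩
  refine ⟨d, mul_left_cancel₀ hq.ne_zero ?_⟩
  rw [hc, mul_mul_mul_comm, sq, mul_assoc]

theorem Nat.isSquare_of_isSquare_sq_mul {b m : ℕ} (hb : b ≠ 0) (h : IsSquare (b ^ 2 * m)) :
    IsSquare m := by
  obtain ⟨c, hc⟩ := h
  obtain ⟨d, rfl⟩ : b ∣ c := (Nat.pow_dvd_pow_iff two_ne_zero).mp ⟨m, by rw [sq c, ← hc]⟩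
  exact ⟨d, Nat.eq_of_mul_eq_mul_left (pow_pos (Nat.pos_of_ne_zero hb) 2) (by rw [hc]; ring)⟩

namespace Corr

theorem le {n k : ℕ} (h : Corr n k) : n ≤ k := by
  obtain ⟨S, -, -, hn, -, hS⟩ := h
  exact (hS n hn).2

theorem isSquare_of_self {n : ℕ} (h : Corr n n) : IsSquare n := by
  obtain ⟨S, -, hsq, hn, -, hS⟩ := h
  obtain rfl : S = {n} :=
    Finset.eq_singleton_iff_unique_mem.mpr ⟨hn, fun a ha => le_antisymm (hS a ha).2 (hS a ha).1⟩
  simpa using hsq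

theorem of_lt_of_lt_of_lt {w x y z : ℕ} (hw : 0 < w) (hwx : w < x) (hxy : x < y) (hyz : y < z)
    (hsq : IsSquare (w * x * y * z)) : Corr w z := by
  refine ⟨{w, x, y, z}, ?_, ?_, by simp, by simp, ?_⟩
  · simp only [Finset.mem_insert, Finset.mem_singleton]
    rintro a (rfl | rfl | rfl | rfl) <;> omega
  · rwa [Finset.prod_insert (by simp; omega), Finset.prod_insert (by simp; omega),
      Finset.prod_insert (by simp; omega), Finset.prod_singleton, ← mul_assoc, ← mul_assoc]
  · simp only [Finset.mem_insert, Finset.mem_singleton]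
    rintro a (rfl | rfl | rfl | rfl) <;> omega

theorem sq_mul {b q : ℕ} (hb : 0 < b) (hq : 2 ≤ q) :
    Corr (b ^ 2 * q) ((b + 1) * (q * b + 1)) := by
  refine of_lt_of_lt_of_lt (by positivity) (y := q * b * (b + 1)) (x := b * (q * b + 1))
    (by nlinarith) (by nlinarith) (by nlinarith) ⟨b ^ 2 * q * (b + 1) * (q * b + 1), by ring⟩

end Corr

theorem g_le {n k : ℕ} (h : Corr n k) : g n ≤ k := Nat.sInf_le h

theorem corr_g {n k : ℕ} (h : Corr n k) : Corr n (g n) :=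
  Nat.sInf_mem (s := {k | Corr n k}) ⟨k, h⟩

theorem mul_g_not_square_general (n : ℕ) (hns : ¬ IsSquare n) :
    ¬ IsSquare (n * g n) := by
  intro hsq
  have hn : 0 < n := Nat.pos_of_ne_zero (by rintro rfl; exact hns ⟨0, rfl⟩)
  obtain ⟨q, b, -, hb, rfl, hq⟩ := Nat.sq_mul_squarefree_of_pos hn
  have hq2 : 2 ≤ q := q.two_le_iff.mpr ⟨hq.ne_zero, by rintro rfl; exact hns ⟨b, by ring⟩⟩
  have hcorr := Corr.sq_mul hb hq2
  have hlt : g (b ^ 2 * q) < q * (b + 1) ^ 2 := (g_le hcorr).trans_lt (by nlinarith)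
  have hle : b ^ 2 * q ≤ g (b ^ 2 * q) := (corr_g hcorr).le
  obtain ⟨e, he⟩ := hq.exists_eq_mul_sq_of_isSquare_mul
    (Nat.isSquare_of_isSquare_sq_mul hb.ne' (by rwa [← mul_assoc]))
  obtain rfl : e = b := by
    rw [he] at hlt hle
    have hbe : b ≤ e := (Nat.pow_le_pow_iff_left two_ne_zero).mp (by nlinarith)
    have heb : e < b + 1 := (Nat.pow_lt_pow_iff_left two_ne_zero).mp (by nlinarith)
    omega
  have hg : g (e ^ 2 * q) = e ^ 2 * q := by rw [he, mul_comm]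
  exact hns (Corr.isSquare_of_self (by simpa only [hg] using corr_g hcorr))

theorem mul_g_not_square (n : ℕ) (hn : 0 < n) (hns : ¬ IsSquare n) :
    ¬ IsSquare (n * g n) :=
  mul_g_not_square_general n hns
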